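/- The regularized policy improvement operator I_GMZ, defined by I_GMZ(π,q)(a|s) ∝ π(a|s)·exp(β·q(s,a)) with β > 0, is a greedification operator: for every state s, the expected value under the new policy satisfies Σ_a I_GMZ(π,q)(a|s)·q(s,a) ≥ Σ_a π(a|s)·q(s,a). -/
import Mathlib


theorem stmt_0 {A : Type*} [Fintype A] [Nonempty A]
    (q π : A → ℝ) (hpos : ∀ a, 0 < π a) (hsum : ∑ a, π a = 1)
    (β : ℝ) (hβ : 0 < β) :
    ∑ a, (π a * Real.exp (β * q a) / ∑ a', π a' * Real.exp (β * q a')) * q a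
      ≥ ∑ a, π a * q a := by
  set e : A → ℝ := fun a => Real.exp (β * q a) with he
  have hS : 0 < ∑ a', π a' * e a' :=
    Finset.sum_pos (fun a _ => mul_pos (hpos a) (Real.exp_pos _)) Finset.univ_nonempty
  have key : (∑ a, π a * q a) * (∑ a, π a * e a) ≤ ∑ a, π a * e a * q a := by
    have T : (0:ℝ) ≤ ∑ a, ∑ b, π a * π b * ((q a - q b) * (e a - e b)) := by
      apply Finset.sum_nonneg; intro a _
      apply Finset.sum_nonneg; intro b _
      apply mul_nonneg (mul_nonneg (hpos a).le (hpos b).le)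
      rcases le_total (q a) (q b) with h | h
      · have h1 : e a ≤ e b := Real.exp_le_exp.2 (by nlinarith)
        nlinarith
      · have h1 : e b ≤ e a := Real.exp_le_exp.2 (by nlinarith)
        nlinarith
    have expand : ∑ a, ∑ b, π a * π b * ((q a - q b) * (e a - e b))
        = 2 * (∑ a, π a * e a * q a) - 2 * ((∑ a, π a * q a) * (∑ a, π a * e a)) := by
      have inner : ∀ a : A, ∑ b, π a * π b * ((q a - q b) * (e a - e b))
          = (π a * e a * q a) * (∑ b, π b) - (π a * q a) * (∑ b, π b * e b)
            - (π a * e a) * (∑ b, π b * q b) + π a * (∑ b, π b * e b * q b) := by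
        intro a
        simp only [Finset.mul_sum, ← Finset.sum_sub_distrib, ← Finset.sum_add_distrib]
        exact Finset.sum_congr rfl (fun b _ => by ring)
      rw [Finset.sum_congr rfl (fun a _ => inner a)]
      simp only [Finset.sum_add_distrib, Finset.sum_sub_distrib, ← Finset.sum_mul, hsum,
        mul_one, one_mul]
      ring
    linarith
  have lhs : ∑ a, (π a * e a / ∑ a', π a' * e a') * q a
      = (∑ a, π a * e a * q a) / (∑ a', π a' * e a') := by
    rw [Finset.sum_div]
    exact Finset.sum_congr rfl (fun a _ => by ring)
  rw [lhs, ge_iff_le, le_div_iff₀ hS]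
  exact key
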